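/- arXiv:2403.08209 — 2 statements merged into one kernel-verified Lean document; each statement's English description precedes it below -/
import Mathlib

section
/- There exist a constant c > 0 and an infinite family of strings (T_m)_{m≥1}, with lengths n_m = |T_m| tending to infinity, such that z^{⌈c·log n_m⌉}(T_m) = o(ĝ_rl(T_m)); that is, the ratio z^{⌈c·log n_m⌉}(T_m) / ĝ_rl(T_m) tends to 0 as m tends to infinity. -/
variable {α : Type*}

/-- The substring `T[i..i+ℓ)` (0-indexed). -/
def sub (T : List α) (i ℓ : ℕ) : List α := (T.drop i).take ℓ

/-- `p` is a period of `w`: `0 < p ≤ |w|` and `w[i] = w[i+p]` whenever both sides exist. -/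
def IsPeriod (w : List α) (p : ℕ) : Prop :=
  0 < p ∧ p ≤ w.length ∧ ∀ i, i + p < w.length → w[i]? = w[i + p]?

/-- The minimum period of `w`. -/
noncomputable def minPeriod (w : List α) : ℕ := sInf {p | IsPeriod w p}

/-- Starting position (0-indexed) of the `j`-th phrase (0-indexed) of a parsing,
the parsing being given as a list of (length, source) pairs. -/
def startOf (P : List (ℕ × ℕ)) (j : ℕ) : ℕ := ((P.take j).map Prod.fst).sum

/-- Length of the `j`-th phrase. -/
def lenOf (P : List (ℕ × ℕ)) (j : ℕ) : ℕ := (P[j]?.map Prod.fst).getD 0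

/-- Source of the `j`-th phrase. -/
def srcOf (P : List (ℕ × ℕ)) (j : ℕ) : ℕ := (P[j]?.map Prod.snd).getD 0

/-- `P` is an LZ-like encoding of `T`: phrases have positive length, cover `T`,
and every phrase of length at least 2 has a source strictly before its start with a
matching (possibly overlapping) previous occurrence. (Length-1 phrases are literal
symbols; the symbol is determined by `T`, so it need not be stored.) -/
def IsLZ (T : List α) (P : List (ℕ × ℕ)) : Prop :=
  (∀ q ∈ P, 1 ≤ q.1) ∧ (P.map Prod.fst).sum = T.length ∧
  ∀ j < P.length, 2 ≤ lenOf P j →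
    srcOf P j < startOf P j ∧
    sub T (srcOf P j) (lenOf P j) = sub T (startOf P j) (lenOf P j)

/-- `H` is the height function of the LZ-like encoding `P`:
`H i = 0` on length-1 phrases, and otherwise
`H i = H (s_j + (i - b_j) % (b_j - s_j)) + 1` for position `i` of phrase `j`. -/
def IsHeight (P : List (ℕ × ℕ)) (H : ℕ → ℕ) : Prop :=
  ∀ j < P.length, ∀ i, startOf P j ≤ i → i < startOf P j + lenOf P j →
    (lenOf P j = 1 → H i = 0) ∧
    (2 ≤ lenOf P j →
      H i = H (srcOf P j + (i - startOf P j) % (startOf P j - srcOf P j)) + 1)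

/-- The LZ-like encoding `P` of `T` is `h`-bounded. -/
def HBounded (T : List α) (P : List (ℕ × ℕ)) (h : ℕ) : Prop :=
  ∃ H : ℕ → ℕ, IsHeight P H ∧ ∀ i < T.length, H i ≤ h

/-- `z^h(T)`: minimum size of an `h`-bounded LZ-like encoding of `T`. -/
noncomputable def zh (T : List α) (h : ℕ) : ℕ :=
  sInf {k | ∃ P : List (ℕ × ℕ), IsLZ T P ∧ HBounded T P h ∧ P.length = k}

/-- `lpf_T(b)`: length of the longest previous factor at position `b` (0-indexed). -/
noncomputable def lpf (T : List α) (b : ℕ) : ℕ :=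
  sSup {l | b + l ≤ T.length ∧ ∃ s < b, sub T s l = sub T b l}

/-- Number of phrases of the greedy LZ77 parsing of `T[b..)`;
`lzCount T 0 = z(T)` is the size of the greedy LZ77 parsing of `T`. -/
noncomputable def lzCount (T : List α) (b : ℕ) : ℕ :=
  if hb : b < T.length then lzCount T (b + max 1 (lpf T b)) + 1 else 0
termination_by T.length - b
decreasing_by
  have h1 : 1 ≤ max 1 (lpf T b) := le_max_left _ _
  omega

/-- Starting positions of the phrases of the greedy LZ77 parsing of `T` (from `b`). -/
noncomputable def lzStarts (T : List α) (b : ℕ) : List ℕ :=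
  if hb : b < T.length then b :: lzStarts T (b + max 1 (lpf T b)) else []
termination_by T.length - b
decreasing_by
  have h1 : 1 ≤ max 1 (lpf T b) := le_max_left _ _
  omega

/-- Right-hand side of a rule of a run-length straight-line program:
`A → a`, `A → BC`, or `A → B^t`. -/
inductive RLRhs (α : Type*) where
  | leaf : α → RLRhs α
  | pair : ℕ → ℕ → RLRhs α
  | pow : ℕ → ℕ → RLRhs α

/-- A run-length straight-line program (RLSLP): variables are `0, …, m-1`
(the start variable being `m-1`), each with exactly one rule referencing
only smaller variables; run-length rules `A → B^t` require `t ≥ 2`.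
Its size is its number `m` of rules. -/
structure RLSLP (α : Type*) where
  m : ℕ
  m_pos : 0 < m
  rule : ℕ → RLRhs α
  wf_pair : ∀ i b c, i < m → rule i = .pair b c → b < i ∧ c < i
  wf_pow : ∀ i b t, i < m → rule i = .pow b t → b < i ∧ 2 ≤ t

/-- The string derived from variable `i` of `G`. -/
def RLSLP.expand (G : RLSLP α) (i : ℕ) : List α :=
  match G.rule i with
  | .leaf a => [a]
  | .pair b c => if _h : b < i ∧ c < i then G.expand b ++ G.expand c else []
  | .pow b t => if _h : b < i then (List.replicate t (G.expand b)).flatten else []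
termination_by i
decreasing_by all_goals omega

/-- `G` generates the string `T`. -/
def RLSLP.Generates (G : RLSLP α) (T : List α) : Prop := G.expand (G.m - 1) = T

/-- Height of the parse (sub)tree of `G` rooted at variable `i`:
leaf rules `A → a` give leaves of the parse tree. -/
def RLSLP.varHeight (G : RLSLP α) (i : ℕ) : ℕ :=
  match G.rule i with
  | .leaf _ => 0
  | .pair b c => if _h : b < i ∧ c < i then max (G.varHeight b) (G.varHeight c) + 1 else 0
  | .pow b _ => if _h : b < i then G.varHeight b + 1 else 0
termination_by i
decreasing_by all_goals omega

/-- Height of the parse tree of `G`. -/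
def RLSLP.parseHeight (G : RLSLP α) : ℕ := G.varHeight (G.m - 1)

/-- `ĝ_rl(T)`: the size of the smallest RLSLP generating `T`. -/
noncomputable def grl (T : List α) : ℕ :=
  sInf {g | ∃ G : RLSLP α, G.Generates T ∧ G.m = g}


/-!
The witness `hardString k a` is the ruler sequence `ruler (k + 1)` followed by `k` blocks, each a
fresh separator and then the window of length `2 ^ k` of the ruler at an offset `a j < 2 ^ k`.
Parsing the ruler by doubling, `ruler (u + 2) = ruler (u + 1) · (u + 1) · ruler (u + 1)`, and each
window as a single copy phrase gives `4k + 1` phrases of height at most `k + 1 ≤ 2 ln n`.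

The string is square-free, so an RLSLP for it has no run-length rules and is determined by its
table of ordinary rules. There are fewer tables of size `k √k` than the `2 ^ (k²)` choices of
`a`, so for some `a` every RLSLP has more than `k √k` rules, and `z^h / ĝ_rl = O(1 / √k)`.
-/

open Filter

def IsSquareFree (w : List α) : Prop := ∀ x : List α, x ≠ [] → ¬ x ++ x <:+: w

theorem IsSquareFree.of_infix {v w : List α} (hw : IsSquareFree w) (h : v <:+: w) :
    IsSquareFree v :=
  fun x hx hxv => hw x hx (hxv.trans h)

theorem infix_or_infix_of_infix_append_cons {u v w : List α} {z : α}
    (h : w <:+: u ++ z :: v) (hz : z ∉ w) : w <:+: u ∨ w <:+: v := by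
  obtain ⟨s, t, hst⟩ := h
  rw [List.append_assoc, List.append_eq_append_iff] at hst
  rcases hst with ⟨u', rfl, hwt⟩ | ⟨s', rfl, hzv⟩
  · rcases List.append_eq_append_iff.mp hwt with ⟨w', rfl, -⟩ | ⟨c, rfl, hc⟩
    · exact Or.inl ⟨s, w', by simp⟩
    · rcases c with _ | ⟨y, c⟩
      · exact Or.inl ⟨s, [], by simp⟩
      · obtain ⟨rfl, -⟩ := List.cons.inj hc
        simp at hz
  · rcases s' with _ | ⟨y, s'⟩
    · rcases w with _ | ⟨y, w⟩
      · exact Or.inr List.nil_infix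
      · obtain ⟨rfl, -⟩ := List.cons.inj hzv
        simp at hz
    · obtain ⟨-, rfl⟩ := List.cons.inj hzv
      exact Or.inr ⟨s', t, by simp⟩

/-- A square through a letter that occurs only once would contain it twice. -/
theorem IsSquareFree.append_cons [DecidableEq α] {u v : List α} {z : α}
    (hu : IsSquareFree u) (hv : IsSquareFree v) (hzu : z ∉ u) (hzv : z ∉ v) :
    IsSquareFree (u ++ z :: v) := by
  intro x hx hxx
  by_cases hzx : z ∈ x
  · have hle := hxx.sublist.count_le z
    have hx1 : 1 ≤ x.count z := List.one_le_count_iff.mpr hzx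
    simp only [List.count_append, List.count_eq_zero_of_not_mem hzu, List.count_cons_self,
      List.count_eq_zero_of_not_mem hzv, zero_add] at hle
    omega
  · rcases infix_or_infix_of_infix_append_cons hxx (by simp [hzx]) with h | h
    · exact hu x hx h
    · exact hv x hx h

theorem sub_isInfix (T : List α) (i ℓ : ℕ) : sub T i ℓ <:+: T :=
  (List.take_prefix _ _).isInfix.trans (List.drop_suffix _ _).isInfix

theorem sub_of_prefix {w T : List α} (h : w <+: T) {i ℓ : ℕ} (hiℓ : i + ℓ ≤ w.length) :
    sub T i ℓ = sub w i ℓ := by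
  obtain ⟨t, rfl⟩ := h
  unfold sub
  rw [List.drop_append, List.take_append, Nat.sub_eq_zero_of_le (by rw [List.length_drop]; omega),
    List.take_zero, List.append_nil]

theorem getElem?_sub (T : List α) {i ℓ o : ℕ} (ho : o < ℓ) :
    (sub T i ℓ)[o]? = T[i + o]? := by
  rw [sub, List.getElem?_take, if_pos ho, List.getElem?_drop]

theorem sub_append_cons_self (u : List α) (z : α) :
    sub (u ++ z :: u) (u.length + 1) u.length = u := by
  simp [sub, List.drop_append, List.drop_of_length_le (Nat.le_succ u.length)]

theorem sub_append_zero (u v : List α) : sub (u ++ v) 0 u.length = u := by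
  simp [sub]

section Phrases

theorem startOf_append_left (P Q : List (ℕ × ℕ)) {j : ℕ} (h : j ≤ P.length) :
    startOf (P ++ Q) j = startOf P j := by
  rw [startOf, startOf, List.take_append_of_le_length h]

theorem lenOf_append_left (P Q : List (ℕ × ℕ)) {j : ℕ} (h : j < P.length) :
    lenOf (P ++ Q) j = lenOf P j := by
  rw [lenOf, lenOf, List.getElem?_append_left h]

theorem srcOf_append_left (P Q : List (ℕ × ℕ)) {j : ℕ} (h : j < P.length) :
    srcOf (P ++ Q) j = srcOf P j := by
  rw [srcOf, srcOf, List.getElem?_append_left h]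

theorem startOf_append_right (P Q : List (ℕ × ℕ)) (j : ℕ) :
    startOf (P ++ Q) (P.length + j) = (P.map Prod.fst).sum + startOf Q j := by
  rw [startOf, startOf, List.take_append, List.take_of_length_le (by omega),
    Nat.add_sub_cancel_left, List.map_append, List.sum_append]

theorem lenOf_append_right (P Q : List (ℕ × ℕ)) (j : ℕ) :
    lenOf (P ++ Q) (P.length + j) = lenOf Q j := by
  rw [lenOf, lenOf, List.getElem?_append_right (Nat.le_add_right _ _), Nat.add_sub_cancel_left]

theorem srcOf_append_right (P Q : List (ℕ × ℕ)) (j : ℕ) :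
    srcOf (P ++ Q) (P.length + j) = srcOf Q j := by
  rw [srcOf, srcOf, List.getElem?_append_right (Nat.le_add_right _ _), Nat.add_sub_cancel_left]

/-- The phrases of `P`, laid out from position `b` on, are legal phrases of `T` on which `H`
satisfies the height recursion. Unlike `IsLZ ∧ IsHeight`, this is stable under concatenation. -/
def PhrasesValid (T : List α) (H : ℕ → ℕ) (P : List (ℕ × ℕ)) (b : ℕ) : Prop :=
  ∀ j < P.length, 1 ≤ lenOf P j ∧
    (lenOf P j = 1 → H (b + startOf P j) = 0) ∧
    (2 ≤ lenOf P j →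
      srcOf P j < b + startOf P j ∧
      sub T (srcOf P j) (lenOf P j) = sub T (b + startOf P j) (lenOf P j) ∧
      ∀ i, b + startOf P j ≤ i → i < b + startOf P j + lenOf P j →
        H i = H (srcOf P j + (i - (b + startOf P j)) % (b + startOf P j - srcOf P j)) + 1)

variable {T : List α} {H : ℕ → ℕ}

theorem PhrasesValid.nil (b : ℕ) : PhrasesValid T H [] b := by
  intro j hj
  simp at hj

theorem PhrasesValid.append {P Q : List (ℕ × ℕ)} {b : ℕ} (hP : PhrasesValid T H P b)
    (hQ : PhrasesValid T H Q (b + (P.map Prod.fst).sum)) : PhrasesValid T H (P ++ Q) b := by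
  intro j hj
  rw [List.length_append] at hj
  by_cases h : j < P.length
  · rw [lenOf_append_left _ _ h, srcOf_append_left _ _ h, startOf_append_left _ _ h.le]
    exact hP j h
  · obtain ⟨j, rfl⟩ := Nat.exists_eq_add_of_le (not_lt.mp h)
    rw [lenOf_append_right, srcOf_append_right, startOf_append_right, ← add_assoc]
    exact hQ j (by omega)

theorem PhrasesValid.literal {b : ℕ} (s : ℕ) (hb : H b = 0) : PhrasesValid T H [(1, s)] b := by
  intro j hj
  obtain rfl : j = 0 := by simpa using hj
  simpa [lenOf, startOf] using hb

/-- A copy phrase whose source ends before it starts, so that the height recursion involves no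
wrap-around. -/
theorem PhrasesValid.copy {b ℓ s : ℕ} (hℓ : 2 ≤ ℓ) (hsℓ : s + ℓ ≤ b)
    (hT : sub T s ℓ = sub T b ℓ) (hH : ∀ o < ℓ, H (b + o) = H (s + o) + 1) :
    PhrasesValid T H [(ℓ, s)] b := by
  intro j hj
  obtain rfl : j = 0 := by simpa using hj
  simp only [lenOf, srcOf, startOf, List.getElem?_cons_zero, Option.map_some,
    Option.getD_some, List.take_zero, List.map_nil, List.sum_nil, add_zero]
  refine ⟨by omega, by omega, fun _ => ⟨by omega, hT, fun i hi hi' => ?_⟩⟩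
  obtain ⟨o, rfl⟩ := Nat.exists_eq_add_of_le hi
  rw [Nat.add_sub_cancel_left, Nat.mod_eq_of_lt (by omega)]
  exact hH o (by omega)

theorem PhrasesValid.isLZ_isHeight {P : List (ℕ × ℕ)} (hP : PhrasesValid T H P 0)
    (hsum : (P.map Prod.fst).sum = T.length) : IsLZ T P ∧ IsHeight P H := by
  simp only [PhrasesValid, zero_add] at hP
  refine ⟨⟨fun q hq => ?_, hsum,
      fun j hj h2 => ⟨((hP j hj).2.2 h2).1, ((hP j hj).2.2 h2).2.1⟩⟩,
    fun j hj i hi hi' => ⟨fun h1 => ?_, fun h2 => ((hP j hj).2.2 h2).2.2 i hi hi'⟩⟩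
  · obtain ⟨j, hj, rfl⟩ := List.getElem_of_mem hq
    simpa [lenOf, hj] using (hP j hj).1
  · obtain rfl : i = startOf P j := by omega
    exact (hP j hj).2.1 h1

end Phrases

namespace RLSLP

variable {G : RLSLP α} {i : ℕ}

theorem expand_of_rule_leaf {x : α} (h : G.rule i = .leaf x) : G.expand i = [x] := by
  rw [expand, h]

theorem expand_of_rule_pair {b c : ℕ} (h : G.rule i = .pair b c) (hb : b < i) (hc : c < i) :
    G.expand i = G.expand b ++ G.expand c := by
  rw [expand, h]
  simp [hb, hc]

theorem expand_of_rule_pow {b t : ℕ} (h : G.rule i = .pow b t) (hb : b < i) :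
    G.expand i = (List.replicate t (G.expand b)).flatten := by
  rw [expand, h]
  simp [hb]

theorem expand_ne_nil (hi : i < G.m) : G.expand i ≠ [] := by
  induction i using Nat.strong_induction_on with
  | _ i ih =>
    match h : G.rule i with
    | .leaf x => simp [expand_of_rule_leaf h]
    | .pair b c =>
      obtain ⟨hb, hc⟩ := G.wf_pair i b c hi h
      simp [expand_of_rule_pair h hb hc, ih b hb (by omega)]
    | .pow b t =>
      obtain ⟨hb, ht⟩ := G.wf_pow i b t hi h
      rw [expand_of_rule_pow h hb, Ne, List.flatten_eq_nil_iff]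
      simpa using ⟨by omega, ih b hb (by omega)⟩

theorem rule_ne_pow_of_isSquareFree (hi : i < G.m) (hsq : IsSquareFree (G.expand i)) (b t : ℕ) :
    G.rule i ≠ .pow b t := by
  intro h
  obtain ⟨hb, ht⟩ := G.wf_pow i b t hi h
  obtain ⟨t, rfl⟩ := Nat.exists_eq_add_of_le' ht
  refine hsq (G.expand b) (expand_ne_nil (by omega))
    ⟨[], (List.replicate t (G.expand b)).flatten, ?_⟩
  rw [expand_of_rule_pow h hb, add_comm, List.replicate_add]
  simp [List.replicate_succ]

/-- The grammar with start rule `A → x B`, where `B` is the start variable of `G`. -/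
def consLeaf (x : α) (G : RLSLP α) : RLSLP α where
  m := G.m + 2
  m_pos := by omega
  rule i := if i < G.m then G.rule i else if i = G.m then .leaf x else .pair G.m (G.m - 1)
  wf_pair i b c hi h := by
    split_ifs at h with h₁ h₂
    · exact G.wf_pair i b c h₁ h
    · cases h
      have := G.m_pos
      omega
  wf_pow i b t hi h := by
    split_ifs at h with h₁
    · exact G.wf_pow i b t h₁ h

theorem expand_consLeaf_of_lt (x : α) (hi : i < G.m) :
    (consLeaf x G).expand i = G.expand i := by
  induction i using Nat.strong_induction_on with
  | _ i ih =>
    have hrule : (consLeaf x G).rule i = G.rule i := if_pos hi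
    rw [expand, expand, hrule]
    split
    · rfl
    · split_ifs with h
      · rw [ih _ h.1 (by omega), ih _ h.2 (by omega)]
      · rfl
    · split_ifs with h
      · rw [ih _ h (by omega)]
      · rfl

theorem Generates.consLeaf {T : List α} (x : α) (hG : G.Generates T) :
    (consLeaf x G).Generates (x :: T) := by
  have := G.m_pos
  have hleaf : (RLSLP.consLeaf x G).rule G.m = .leaf x := by simp [RLSLP.consLeaf]
  have hpair : (RLSLP.consLeaf x G).rule (G.m + 1) = .pair G.m (G.m - 1) := by
    simp [RLSLP.consLeaf]
  rw [Generates, show (RLSLP.consLeaf x G).m - 1 = G.m + 1 from rfl,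
    expand_of_rule_pair hpair (by omega) (by omega), expand_of_rule_leaf hleaf,
    expand_consLeaf_of_lt x (by omega), hG]
  rfl

theorem exists_generates {T : List α} (hT : T ≠ []) : ∃ G : RLSLP α, G.Generates T := by
  induction T with
  | nil => exact absurd rfl hT
  | cons x T ih =>
    rcases eq_or_ne T [] with rfl | hT'
    · exact ⟨⟨1, one_pos, fun _ => .leaf x, by simp, by simp⟩, expand_of_rule_leaf rfl⟩
    · obtain ⟨G, hG⟩ := ih hT'
      exact ⟨_, hG.consLeaf x⟩

end RLSLP

theorem exists_generates_of_grl_le {T : List α} (hT : T ≠ []) {g : ℕ} (hg : grl T ≤ g) :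
    ∃ G : RLSLP α, G.Generates T ∧ G.m ≤ g := by
  obtain ⟨G, hG⟩ := RLSLP.exists_generates hT
  obtain ⟨G', hG', hm⟩ := Nat.sInf_mem (⟨G.m, G, hG, rfl⟩ :
    {g | ∃ G : RLSLP α, G.Generates T ∧ G.m = g}.Nonempty)
  exact ⟨G', hG', hm.trans_le hg⟩

/-- A straight-line program with at most `g` rules over the alphabet `{0, …, σ - 1}`, stored as
a finite table: `some (.inl s)` is the rule `A → s`, `some (.inr (b, c))` is `A → B C`. -/
abbrev SLPTable (g σ : ℕ) := Fin g → Option (Fin σ ⊕ Fin g × Fin g)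

def SLPTable.expand {g σ : ℕ} (D : SLPTable g σ) (i : ℕ) : List ℕ :=
  if hi : i < g then
    match D ⟨i, hi⟩ with
    | some (.inl s) => [s]
    | some (.inr (b, c)) => if _h : b.val < i ∧ c.val < i then D.expand b ++ D.expand c else []
    | none => []
  else []
termination_by i
decreasing_by all_goals omega

def RLSLP.toTable (G : RLSLP ℕ) (g σ : ℕ) : SLPTable g σ := fun i =>
  match G.rule i with
  | .leaf s => if hs : s < σ then some (.inl ⟨s, hs⟩) else none
  | .pair b c => if h : b < g ∧ c < g then some (.inr (⟨b, h.1⟩, ⟨c, h.2⟩)) else none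
  | .pow _ _ => none

/-- Run-length rules cannot occur in a grammar of a square-free string, so such a grammar is
recovered from its table of ordinary rules. -/
theorem RLSLP.expand_toTable {G : RLSLP ℕ} {g σ : ℕ} (hmg : G.m ≤ g) {i : ℕ} (hi : i < G.m)
    (hsq : IsSquareFree (G.expand i)) (hσ : ∀ x ∈ G.expand i, x < σ) :
    (G.toTable g σ).expand i = G.expand i := by
  induction i using Nat.strong_induction_on with
  | _ i ih =>
    have hig : i < g := by omega
    match h : G.rule i with
    | .leaf s =>
      have hex := expand_of_rule_leaf h
      have hs : s < σ := hσ s (by simp [hex])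
      rw [SLPTable.expand, dif_pos hig, hex]
      simp [toTable, h, hs]
    | .pair b c =>
      obtain ⟨hb, hc⟩ := G.wf_pair i b c hi h
      have hex := expand_of_rule_pair h hb hc
      have hbi : G.expand b <:+: G.expand i := hex ▸ List.infix_append_left
      have hci : G.expand c <:+: G.expand i := hex ▸ List.infix_append_right
      have htab :
          G.toTable g σ ⟨i, hig⟩ = some (.inr (⟨b, by omega⟩, ⟨c, by omega⟩)) := by
        simp [toTable, h, show b < g ∧ c < g by omega]
      rw [SLPTable.expand, dif_pos hig, htab]
      simp only [dif_pos (show b < i ∧ c < i from ⟨hb, hc⟩)]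
      rw [ih b hb (by omega) (hsq.of_infix hbi) fun x hx => hσ x (hbi.mem hx),
        ih c hc (by omega) (hsq.of_infix hci) fun x hx => hσ x (hci.mem hx), hex]
    | .pow b t => exact absurd h (rule_ne_pow_of_isSquareFree hi hsq b t)

/-- Each of the strings is the expansion of one of `g` variables of an `SLPTable g σ`. -/
theorem card_le_of_forall_generates {ι : Type*} [Fintype ι] {f : ι → List ℕ}
    (hf : Function.Injective f) {σ g : ℕ} (hsq : ∀ i, IsSquareFree (f i))
    (hσ : ∀ i, ∀ x ∈ f i, x < σ)
    (hg : ∀ i, ∃ G : RLSLP ℕ, G.Generates (f i) ∧ G.m ≤ g) :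
    Fintype.card ι ≤ g * (σ + g * g + 1) ^ g := by
  choose G hG hGg using hg
  have hstart : ∀ i, (G i).m - 1 < g := fun i => by have := (G i).m_pos; have := hGg i; omega
  let code : ι → Fin g × SLPTable g σ := fun i => (⟨_, hstart i⟩, (G i).toTable g σ)
  have hdecode : ∀ i, (code i).2.expand (code i).1 = f i := fun i => by
    have := (G i).m_pos
    have hfi : (G i).expand ((G i).m - 1) = f i := hG i
    exact (RLSLP.expand_toTable (i := (G i).m - 1) (hGg i) (by omega) (hfi ▸ hsq i)
      (hfi ▸ hσ i)).trans hfi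
  have hcode : Function.Injective code := fun i j hij => hf <| by
    rw [← hdecode i, ← hdecode j, hij]
  simpa using Fintype.card_le_of_injective code hcode

def ruler : ℕ → List ℕ
  | 0 => []
  | d + 1 => ruler d ++ d :: ruler d

theorem length_ruler (d : ℕ) : (ruler d).length = 2 ^ d - 1 := by
  induction d with
  | zero => rfl
  | succ d ih =>
    simp only [ruler, List.length_append, List.length_cons, ih, pow_succ]
    have := Nat.one_le_two_pow (n := d)
    omega

theorem lt_of_mem_ruler {d x : ℕ} (h : x ∈ ruler d) : x < d := by
  induction d with
  | zero => simp [ruler] at h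
  | succ d ih =>
    simp only [ruler, List.mem_append, List.mem_cons] at h
    rcases h with h | rfl | h <;> grind

theorem ruler_prefix_ruler {d e : ℕ} (h : d ≤ e) : ruler d <+: ruler e := by
  induction e, h using Nat.le_induction with
  | base => exact List.prefix_refl _
  | succ e _ ih => exact ih.trans (List.prefix_append _ _)

theorem isSquareFree_ruler (d : ℕ) : IsSquareFree (ruler d) := by
  induction d with
  | zero => intro x hx h; exact hx (List.append_eq_nil_iff.mp (List.eq_nil_of_infix_nil h)).1
  | succ d ih =>
    have hd : d ∉ ruler d := fun h => (lt_of_mem_ruler h).false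
    exact ih.append_cons ih hd hd

theorem getElem?_ruler_succ_length (d : ℕ) : (ruler (d + 1))[2 ^ d - 1]? = some d := by
  rw [ruler, ← length_ruler d, List.getElem?_append_right le_rfl, Nat.sub_self]
  rfl

theorem getElem?_ruler_succ_ne {d i : ℕ} (hi : i < 2 ^ d - 1) :
    (ruler (d + 1))[i]? ≠ some d := by
  rw [ruler, List.getElem?_append_left (by rwa [length_ruler])]
  intro h
  exact (lt_of_mem_ruler (List.mem_of_getElem? h)).false

section HardString

variable (k : ℕ) (a : ℕ → ℕ)

def window (x : ℕ) : List ℕ := sub (ruler (k + 1)) x (2 ^ k)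

/-- The separators `k + 1 + j` occur nowhere else in `hardString k a`, which keeps it
square-free. -/
def blocks : ℕ → ℕ → List ℕ
  | 0, _ => []
  | r + 1, j => (k + 1 + j) :: (window k (a j) ++ blocks r (j + 1))

def hardString : List ℕ := ruler (k + 1) ++ blocks k a k 0

variable {k a}

theorem length_window {x : ℕ} (hx : x < 2 ^ k) : (window k x).length = 2 ^ k := by
  simp only [window, sub, List.length_take, List.length_drop, length_ruler, pow_succ]
  omega

theorem lt_of_mem_window {x y : ℕ} (h : y ∈ window k x) : y < k + 1 :=
  lt_of_mem_ruler ((sub_isInfix _ _ _).mem h)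

theorem eq_of_window_eq {x y : ℕ} (hx : x < 2 ^ k) (hy : y < 2 ^ k)
    (h : window k x = window k y) : x = y := by
  wlog hxy : x < y generalizing x y
  · rcases (not_lt.mp hxy).eq_or_lt with rfl | hyx
    · rfl
    · exact (this hy hx h.symm hyx).symm
  -- `k` occurs in `window k y` at offset `2 ^ k - 1 - y`, but at that offset `window k x`
  -- still lies strictly inside the first half of `ruler (k + 1)`.
  have hsep := congrArg (·[2 ^ k - 1 - y]?) h
  simp only [window, getElem?_sub _ (show 2 ^ k - 1 - y < 2 ^ k by omega)] at hsep
  rw [show y + (2 ^ k - 1 - y) = 2 ^ k - 1 by omega, getElem?_ruler_succ_length] at hsep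
  exact absurd hsep (getElem?_ruler_succ_ne (by omega))

theorem mem_blocks {r j x : ℕ} (h : x ∈ blocks k a r j) :
    x < k + 1 ∨ (k + 1 + j ≤ x ∧ x < k + 1 + j + r) := by
  induction r generalizing j with
  | zero => simp [blocks] at h
  | succ r ih =>
    simp only [blocks, List.mem_cons, List.mem_append] at h
    rcases h with rfl | h | h
    · omega
    · exact Or.inl (lt_of_mem_window h)
    · have := ih h
      omega

theorem length_blocks (ha : ∀ j, a j < 2 ^ k) (r j : ℕ) :
    (blocks k a r j).length = r * (2 ^ k + 1) := by
  induction r generalizing j with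
  | zero => simp [blocks]
  | succ r ih =>
    simp only [blocks, List.length_cons, List.length_append, length_window (ha j), ih]
    ring

theorem drop_blocks (ha : ∀ j, a j < 2 ^ k) {i r : ℕ} (hir : i ≤ r) (j : ℕ) :
    (blocks k a r j).drop (i * (2 ^ k + 1)) = blocks k a (r - i) (j + i) := by
  induction i generalizing r j with
  | zero => simp
  | succ i ih =>
    obtain ⟨r, rfl⟩ : ∃ r', r = r' + 1 := ⟨r - 1, by omega⟩
    rw [add_mul, one_mul, add_comm, ← List.drop_drop, blocks, List.drop_succ_cons,
      List.drop_left' (length_window (ha j)), ih (show i ≤ r by omega)]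
    congr 1 <;> omega

theorem eq_of_blocks_eq {a' : ℕ → ℕ} (ha : ∀ j, a j < 2 ^ k) (ha' : ∀ j, a' j < 2 ^ k)
    {r j : ℕ} (h : blocks k a r j = blocks k a' r j) {i : ℕ} (hi : i < r) :
    a (j + i) = a' (j + i) := by
  induction r generalizing i j with
  | zero => omega
  | succ r ih =>
    obtain ⟨-, h⟩ := List.cons.inj h
    obtain ⟨hw, h⟩ := List.append_inj h (by rw [length_window (ha j), length_window (ha' j)])
    rcases i with _ | i
    · exact eq_of_window_eq (ha j) (ha' j) hw
    · rw [← add_assoc, add_right_comm]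
      exact ih h (by omega)

theorem isSquareFree_append_blocks {w : List ℕ} (hw : w <:+: ruler (k + 1)) (r j : ℕ) :
    IsSquareFree (w ++ blocks k a r j) := by
  induction r generalizing j w with
  | zero => simpa [blocks] using (isSquareFree_ruler _).of_infix hw
  | succ r ih =>
    apply ((isSquareFree_ruler _).of_infix hw).append_cons (ih (sub_isInfix _ _ _) (j + 1))
    · exact fun h => absurd (lt_of_mem_ruler (hw.mem h)) (by omega)
    · intro h
      rcases List.mem_append.mp h with h | h
      · exact absurd (lt_of_mem_window h) (by omega)
      · have := mem_blocks h
        omega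

theorem length_hardString (ha : ∀ j, a j < 2 ^ k) :
    (hardString k a).length = 2 ^ (k + 1) - 1 + k * (2 ^ k + 1) := by
  rw [hardString, List.length_append, length_ruler, length_blocks ha]

theorem hardString_ne_nil : hardString k a ≠ [] := by
  simp [hardString, ruler]

theorem isSquareFree_hardString : IsSquareFree (hardString k a) :=
  isSquareFree_append_blocks (List.infix_refl _) k 0

theorem lt_of_mem_hardString {x : ℕ} (h : x ∈ hardString k a) : x < 2 * k + 1 := by
  rcases List.mem_append.mp h with h | h
  · have := lt_of_mem_ruler h
    omega
  · have := mem_blocks h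
    omega

theorem eq_of_hardString_eq {a' : ℕ → ℕ} (ha : ∀ j, a j < 2 ^ k) (ha' : ∀ j, a' j < 2 ^ k)
    (h : hardString k a = hardString k a') {j : ℕ} (hj : j < k) : a j = a' j := by
  simpa using eq_of_blocks_eq ha ha' (List.append_cancel_left h) hj

theorem sub_hardString_zero_eq_sub_two_pow {u : ℕ} (hu : u + 1 ≤ k) :
    sub (hardString k a) 0 (2 ^ (u + 1) - 1) =
      sub (hardString k a) (2 ^ (u + 1)) (2 ^ (u + 1) - 1) := by
  have hpre : ruler (u + 2) <+: hardString k a :=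
    (ruler_prefix_ruler (by omega)).trans (List.prefix_append _ _)
  have hlen := length_ruler (u + 1)
  have hlen2 := length_ruler (u + 2)
  have := Nat.one_le_two_pow (n := u + 1)
  have hpow : 2 ^ (u + 2) = 2 * 2 ^ (u + 1) := by ring
  rw [sub_of_prefix hpre (by omega), sub_of_prefix hpre (by omega),
    ruler, ← hlen, show 2 ^ (u + 1) = (ruler (u + 1)).length + 1 by omega,
    sub_append_zero, sub_append_cons_self]

theorem sub_hardString_eq_window (ha : ∀ j, a j < 2 ^ k) (j : ℕ) :
    sub (hardString k a) (a j) (2 ^ k) = window k (a j) := by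
  have := ha j
  rw [hardString, sub_of_prefix (List.prefix_append _ _) (by rw [length_ruler, pow_succ]; omega)]
  rfl

theorem sub_hardString_block_eq_window (ha : ∀ j, a j < 2 ^ k) {j : ℕ} (hj : j < k) :
    sub (hardString k a) (2 ^ (k + 1) - 1 + j * (2 ^ k + 1) + 1) (2 ^ k) = window k (a j) := by
  obtain ⟨r, hr⟩ : ∃ r, k - j = r + 1 := ⟨k - j - 1, by omega⟩
  have hdrop : (hardString k a).drop (2 ^ (k + 1) - 1 + j * (2 ^ k + 1) + 1) =
      window k (a j) ++ blocks k a r (j + 1) := by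
    rw [hardString, add_assoc, ← List.drop_drop, List.drop_left' (length_ruler _),
      ← List.drop_drop, drop_blocks ha hj.le, hr, zero_add]
    rfl
  rw [sub, hdrop, List.take_left' (length_window (ha j))]

end HardString

/-- The height of the `x`-th letter (counting from 1) in the doubling parsing of the ruler
sequence: letters number `2 ^ t` (separators) and `≤ 3` are literals, and every other letter is
copied from `2 ^ (log₂ x)` letters back. -/
def rulerHeight (x : ℕ) : ℕ :=
  if h : x ≤ 3 ∨ x = 2 ^ Nat.log 2 x then 0 else rulerHeight (x - 2 ^ Nat.log 2 x) + 1
termination_by x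
decreasing_by
  have := Nat.one_le_two_pow (n := Nat.log 2 x)
  omega

theorem rulerHeight_of_le_three {x : ℕ} (h : x ≤ 3) : rulerHeight x = 0 := by
  rw [rulerHeight, dif_pos (Or.inl h)]

theorem rulerHeight_two_pow (t : ℕ) : rulerHeight (2 ^ t) = 0 := by
  rw [rulerHeight, dif_pos (Or.inr (by rw [Nat.log_pow one_lt_two]))]

theorem rulerHeight_add_two_pow {t x : ℕ} (ht : 1 ≤ t) (hx : 1 ≤ x) (hxt : x < 2 ^ (t + 1)) :
    rulerHeight (2 ^ (t + 1) + x) = rulerHeight x + 1 := by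
  have h4 : 4 ≤ 2 ^ (t + 1) := by
    calc 4 = 2 ^ 2 := rfl
      _ ≤ 2 ^ (t + 1) := Nat.pow_le_pow_right two_pos (by omega)
  have hlog : Nat.log 2 (2 ^ (t + 1) + x) = t + 1 :=
    Nat.log_eq_of_pow_le_of_lt_pow (by omega) (by rw [pow_succ 2 (t + 1)]; omega)
  rw [rulerHeight, dif_neg (by rw [hlog]; omega), hlog, Nat.add_sub_cancel_left]

theorem rulerHeight_le_log (x : ℕ) : rulerHeight x ≤ Nat.log 2 x := by
  induction x using Nat.strong_induction_on with
  | _ x ih =>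
    rw [rulerHeight]
    split_ifs with hx
    · exact Nat.zero_le _
    · push Not at hx
      have hle : 2 ^ Nat.log 2 x ≤ x := Nat.pow_log_le_self 2 (by omega)
      have hlt : x < 2 ^ (Nat.log 2 x + 1) := Nat.lt_pow_succ_log_self one_lt_two x
      rw [pow_succ] at hlt
      have hy := ih (x - 2 ^ Nat.log 2 x) (by have := Nat.one_le_two_pow (n := Nat.log 2 x); omega)
      have := Nat.log_lt_of_lt_pow (b := 2) (x := Nat.log 2 x) (y := x - 2 ^ Nat.log 2 x)
        (by omega) (by omega)
      omega

theorem rulerHeight_lt {x d : ℕ} (hx0 : x ≠ 0) (hx : x < 2 ^ d) : rulerHeight x < d :=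
  (rulerHeight_le_log x).trans_lt (Nat.log_lt_of_lt_pow hx0 hx)

section Parsing

variable (k : ℕ) (a : ℕ → ℕ)

/-- Heights of the parsing `hardStringParsing k a`: in the `j`-th block, at offset `r ≥ 1`
after its separator, the letter is copied from position `a j + r - 1` of the ruler prefix. -/
def hardStringHeight (i : ℕ) : ℕ :=
  if i < 2 ^ (k + 1) - 1 then rulerHeight (i + 1)
  else if (i - (2 ^ (k + 1) - 1)) % (2 ^ k + 1) = 0 then 0
  else rulerHeight (a ((i - (2 ^ (k + 1) - 1)) / (2 ^ k + 1)) +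
    (i - (2 ^ (k + 1) - 1)) % (2 ^ k + 1)) + 1

/-- The doubling parsing of `ruler (t + 1)`: after the first letter, each separator `u + 1` is a
literal and is followed by a copy of the prefix `ruler (u + 1)`. -/
def rulerParsing (t : ℕ) : List (ℕ × ℕ) :=
  (1, 0) :: (List.range t).flatMap fun u => [(1, 0), (2 ^ (u + 1) - 1, 0)]

def blocksParsing (m : ℕ) : List (ℕ × ℕ) :=
  (List.range m).flatMap fun j => [(1, 0), (2 ^ k, a j)]

def hardStringParsing : List (ℕ × ℕ) := rulerParsing k ++ blocksParsing k a k

variable {k a}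

theorem rulerParsing_succ (t : ℕ) :
    rulerParsing (t + 1) = rulerParsing t ++ [(1, 0)] ++ [(2 ^ (t + 1) - 1, 0)] := by
  simp [rulerParsing, List.range_succ]

theorem blocksParsing_succ (m : ℕ) :
    blocksParsing k a (m + 1) = blocksParsing k a m ++ [(1, 0)] ++ [(2 ^ k, a m)] := by
  simp [blocksParsing, List.range_succ]

theorem sum_rulerParsing (t : ℕ) : ((rulerParsing t).map Prod.fst).sum = 2 ^ (t + 1) - 1 := by
  induction t with
  | zero => simp [rulerParsing]
  | succ t ih =>
    rw [rulerParsing_succ, List.map_append, List.map_append, List.sum_append, List.sum_append, ih]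
    have := Nat.one_le_two_pow (n := t + 1)
    simp only [List.map_cons, List.map_nil, List.sum_cons, List.sum_nil, pow_succ 2 (t + 1)]
    omega

theorem sum_blocksParsing (m : ℕ) :
    ((blocksParsing k a m).map Prod.fst).sum = m * (2 ^ k + 1) := by
  induction m with
  | zero => simp [blocksParsing]
  | succ m ih =>
    rw [blocksParsing_succ, List.map_append, List.map_append, List.sum_append, List.sum_append, ih]
    simp only [List.map_cons, List.map_nil, List.sum_cons, List.sum_nil]
    ring

theorem length_hardStringParsing : (hardStringParsing k a).length = 4 * k + 1 := by
  simp only [hardStringParsing, rulerParsing, blocksParsing, List.length_cons, List.cons_append,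
    List.length_append, List.length_flatMap, List.length_nil, List.map_const', List.length_range,
    List.sum_replicate, smul_eq_mul]
  omega

theorem hardStringHeight_le (ha : ∀ j, a j < 2 ^ k) (i : ℕ) :
    hardStringHeight k a i ≤ k + 1 := by
  have hpow : 2 ^ (k + 1) = 2 * 2 ^ k := by ring
  unfold hardStringHeight
  split_ifs with h₁ h₂
  · exact (rulerHeight_lt i.succ_ne_zero (show i + 1 < 2 ^ (k + 1) by omega)).le
  · exact Nat.zero_le _
  · have := ha ((i - (2 ^ (k + 1) - 1)) / (2 ^ k + 1))
    have := Nat.mod_lt (i - (2 ^ (k + 1) - 1)) (show 0 < 2 ^ k + 1 by omega)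
    have := rulerHeight_lt (x := a ((i - (2 ^ (k + 1) - 1)) / (2 ^ k + 1)) +
      (i - (2 ^ (k + 1) - 1)) % (2 ^ k + 1)) (d := k + 1) (by omega) (by omega)
    omega

theorem phrasesValid_rulerParsing {t : ℕ} (htk : t ≤ k) :
    PhrasesValid (hardString k a) (hardStringHeight k a) (rulerParsing t) 0 := by
  have hk := Nat.pow_le_pow_right two_pos (show t + 1 ≤ k + 1 by omega)
  induction t with
  | zero =>
    refine PhrasesValid.literal 0 ?_
    rw [hardStringHeight, if_pos (by rw [pow_succ] at hk; omega),
      rulerHeight_of_le_three (by norm_num)]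
  | succ t ih =>
    have h2 := Nat.one_le_two_pow (n := t + 1)
    have hk' : 2 ^ (t + 2) ≤ 2 ^ (k + 1) := hk
    rw [pow_succ 2 (t + 1)] at hk'
    rw [rulerParsing_succ]
    refine ((ih (by omega) (Nat.pow_le_pow_right two_pos (by omega))).append
      (.literal 0 ?_)).append ?_
    · rw [sum_rulerParsing, zero_add, hardStringHeight, if_pos (by omega),
        Nat.sub_add_cancel h2, rulerHeight_two_pow]
    have hb : 0 + ((rulerParsing t ++ [(1, 0)]).map Prod.fst).sum = 2 ^ (t + 1) := by
      simp only [List.map_append, List.map_cons, List.map_nil, List.sum_append, sum_rulerParsing,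
        List.sum_cons, List.sum_nil, add_zero, zero_add]
      omega
    rw [hb]
    rcases Nat.eq_zero_or_pos t with rfl | ht
    -- the copy of `ruler 1` is a single letter, hence a literal
    · refine PhrasesValid.literal 0 ?_
      rw [hardStringHeight, if_pos (by omega), rulerHeight_of_le_three (by norm_num)]
    · have : 1 < 2 ^ t := Nat.one_lt_two_pow_iff.mpr ht.ne'
      have hpow : 2 ^ (t + 1) = 2 * 2 ^ t := by ring
      refine PhrasesValid.copy (by omega) (by omega)
        (sub_hardString_zero_eq_sub_two_pow (by omega)) fun o ho => ?_
      rw [hardStringHeight, if_pos (by omega), hardStringHeight, if_pos (by omega), add_assoc,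
        rulerHeight_add_two_pow ht (by omega) (by omega), zero_add]

theorem phrasesValid_blocksParsing (hk : 1 ≤ k) (ha : ∀ j, a j < 2 ^ k) {m : ℕ}
    (hm : m ≤ k) :
    PhrasesValid (hardString k a) (hardStringHeight k a) (blocksParsing k a m)
      (2 ^ (k + 1) - 1) := by
  have h2 : 2 ≤ 2 ^ k := by
    calc 2 = 2 ^ 1 := rfl
      _ ≤ 2 ^ k := Nat.pow_le_pow_right two_pos hk
  have hpow : 2 ^ (k + 1) = 2 * 2 ^ k := by ring
  induction m with
  | zero => exact .nil _
  | succ m ih =>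
    rw [blocksParsing_succ]
    refine ((ih (by omega)).append (.literal 0 ?_)).append ?_
    · rw [sum_blocksParsing, hardStringHeight, if_neg (by omega), if_pos (by simp)]
    have hb : 2 ^ (k + 1) - 1 + ((blocksParsing k a m ++ [(1, 0)]).map Prod.fst).sum =
        2 ^ (k + 1) - 1 + m * (2 ^ k + 1) + 1 := by
      simp [sum_blocksParsing, add_assoc]
    rw [hb]
    have ham := ha m
    refine PhrasesValid.copy h2 (by omega)
      (by rw [sub_hardString_eq_window ha, sub_hardString_block_eq_window ha (by omega)])
      fun o ho => ?_
    have hq : 2 ^ (k + 1) - 1 + m * (2 ^ k + 1) + 1 + o - (2 ^ (k + 1) - 1) =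
        (1 + o) + (2 ^ k + 1) * m := by
      rw [mul_comm]
      omega
    rw [hardStringHeight, if_neg (by omega), hq, Nat.add_mul_mod_self_left,
      Nat.add_mul_div_left _ _ (by omega), Nat.mod_eq_of_lt (by omega),
      Nat.div_eq_of_lt (by omega), if_neg (by omega), hardStringHeight, if_pos (by omega),
      zero_add, add_comm 1 o, add_assoc]

theorem zh_hardString_le (hk : 1 ≤ k) (ha : ∀ j, a j < 2 ^ k) {h : ℕ} (hh : k + 1 ≤ h) :
    zh (hardString k a) h ≤ 4 * k + 1 := by
  have hsum : ((hardStringParsing k a).map Prod.fst).sum = (hardString k a).length := by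
    rw [hardStringParsing, List.map_append, List.sum_append, sum_rulerParsing,
      sum_blocksParsing, length_hardString ha]
  have hvalid := (phrasesValid_rulerParsing (a := a) le_rfl).append
    (by rw [zero_add, sum_rulerParsing]; exact phrasesValid_blocksParsing hk ha le_rfl)
  obtain ⟨hLZ, hH⟩ := hvalid.isLZ_isHeight hsum
  exact Nat.sInf_le ⟨_, hLZ, ⟨_, hH, fun i _ => (hardStringHeight_le ha i).trans hh⟩,
    length_hardStringParsing⟩

end Parsing

theorem exists_hardString_lt_grl {k g : ℕ}
    (hcount : g * (2 * k + 1 + g * g + 1) ^ g < (2 ^ k) ^ k) :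
    ∃ a : ℕ → ℕ, (∀ j, a j < 2 ^ k) ∧ g < grl (hardString k a) := by
  by_contra! hsmall
  let toFun (v : Fin k → Fin (2 ^ k)) (j : ℕ) : ℕ := if h : j < k then v ⟨j, h⟩ else 0
  have hbound (v : Fin k → Fin (2 ^ k)) (j : ℕ) : toFun v j < 2 ^ k := by
    unfold toFun
    split_ifs
    exacts [(v _).isLt, Nat.two_pow_pos k]
  have hinj : Function.Injective fun v => hardString k (toFun v) := fun v w h => by
    funext j
    have := eq_of_hardString_eq (hbound v) (hbound w) h j.isLt
    simpa [toFun, Fin.ext_iff] using this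
  have := card_le_of_forall_generates hinj (fun _ => isSquareFree_hardString)
    (fun _ _ => lt_of_mem_hardString)
    (fun v => exists_generates_of_grl_le hardString_ne_nil (hsmall _ (hbound v)))
  simp only [Fintype.card_fun, Fintype.card_fin] at this
  omega

theorem thirtytwo_mul_succ_le_two_pow {s : ℕ} (hs : 10 ≤ s) : 32 * (s + 1) ≤ 2 ^ s := by
  induction s, hs using Nat.le_induction with
  | base => norm_num
  | succ s _ ih =>
    rw [pow_succ]
    omega

theorem sixteen_mul_log_succ_le_sqrt {k : ℕ} (hk : 2 ^ 20 ≤ k) :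
    16 * (Nat.log 2 k + 1) ≤ Nat.sqrt k := by
  set L := Nat.log 2 k
  have hL : 20 ≤ L := Nat.le_log_of_pow_le one_lt_two hk
  have hsqrt : 2 ^ (L / 2) ≤ Nat.sqrt k := by
    rw [Nat.le_sqrt, ← pow_add]
    exact (Nat.pow_le_pow_right two_pos (by omega)).trans (Nat.pow_log_le_self 2 (by omega))
  have := thirtytwo_mul_succ_le_two_pow (s := L / 2) (by omega)
  omega

/-- `g · (σ + g² + 1) ^ g` tables against `(2 ^ k) ^ k` strings, for `g = k √k` and
`σ = 2k + 1`. -/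
theorem sqrt_count_lt {k : ℕ} (hk : 2 ^ 20 ≤ k) :
    k * Nat.sqrt k * (2 * k + 1 + k * Nat.sqrt k * (k * Nat.sqrt k) + 1) ^ (k * Nat.sqrt k) <
      (2 ^ k) ^ k := by
  set r := Nat.sqrt k
  set g := k * r
  set L := Nat.log 2 k
  set X := 2 * k + 1 + g * g + 1
  have hr : 1 ≤ r := Nat.sqrt_pos.mpr (by omega)
  have hrr : r * r ≤ k := Nat.sqrt_le k
  have hg : 1 ≤ g := Nat.one_le_iff_ne_zero.mpr (by positivity)
  have hX : X ≤ 2 ^ (4 * (L + 1)) := by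
    have hgg : g * g ≤ k ^ 3 := by
      calc g * g = k * k * (r * r) := by ring
        _ ≤ k * k * k := Nat.mul_le_mul_left _ hrr
        _ = k ^ 3 := by ring
    have hk3 : 4 * k ^ 3 ≤ k ^ 4 := by
      rw [pow_succ k 3, mul_comm]
      exact Nat.mul_le_mul_left _ (by omega)
    have hk1 : k ≤ k ^ 3 := Nat.le_self_pow (by norm_num) k
    calc X ≤ k ^ 4 := by omega
      _ ≤ (2 ^ (L + 1)) ^ 4 := Nat.pow_le_pow_left (Nat.lt_pow_succ_log_self one_lt_two k).le 4
      _ = 2 ^ (4 * (L + 1)) := by rw [← pow_mul, mul_comm]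
  have hexp : 4 * (L + 1) * (g + 1) < k * k := by
    have h16 := sixteen_mul_log_succ_le_sqrt hk
    have : 16 * (L + 1) * g ≤ k * k := by
      calc 16 * (L + 1) * g ≤ r * g := Nat.mul_le_mul_right _ h16
        _ = k * (r * r) := by ring
        _ ≤ k * k := Nat.mul_le_mul_left _ hrr
    nlinarith
  have hgX : g < X := by have := Nat.le_mul_self g; omega
  calc g * X ^ g < X * X ^ g := Nat.mul_lt_mul_of_pos_right hgX (by positivity)
    _ = X ^ (g + 1) := by ring
    _ ≤ (2 ^ (4 * (L + 1))) ^ (g + 1) := Nat.pow_le_pow_left hX _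
    _ < 2 ^ (k * k) := by rw [← pow_mul]; exact Nat.pow_lt_pow_right one_lt_two hexp
    _ = (2 ^ k) ^ k := pow_mul 2 k k

theorem le_ceil_two_mul_log {d n : ℕ} (h : 2 ^ d ≤ n) : d ≤ ⌈2 * Real.log n⌉₊ := by
  have hlog : (d : ℝ) * Real.log 2 ≤ Real.log n := by
    rw [← Real.log_pow]
    exact Real.log_le_log (by positivity) (by exact_mod_cast h)
  have := Real.log_two_gt_d9
  have hd : (d : ℝ) ≤ 2 * Real.log n := by nlinarith [(Nat.cast_nonneg d : (0 : ℝ) ≤ d)]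
  exact (Nat.ceil_natCast d).symm.trans_le (Nat.ceil_mono hd)

theorem zh_div_grl_hardString_le {k : ℕ} (hk : 1 ≤ k) {a : ℕ → ℕ}
    (ha : ∀ j, a j < 2 ^ k) (hgrl : k * Nat.sqrt k < grl (hardString k a)) :
    (zh (hardString k a) ⌈2 * Real.log (hardString k a).length⌉₊ : ℝ) /
      grl (hardString k a) ≤ 5 / Nat.sqrt k := by
  have hlen : 2 ^ (k + 1) ≤ (hardString k a).length := by
    rw [length_hardString ha]
    have := Nat.le_mul_of_pos_left (2 ^ k + 1) (show 0 < k by omega)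
    rw [pow_succ]
    omega
  have hzh := zh_hardString_le hk ha (le_ceil_two_mul_log hlen)
  have hr : 0 < Nat.sqrt k := Nat.sqrt_pos.mpr (by omega)
  calc _ ≤ ((5 * k : ℕ) : ℝ) / ((k * Nat.sqrt k : ℕ) : ℝ) :=
        div_le_div₀ (by positivity) (by exact_mod_cast hzh.trans (by omega)) (by positivity)
          (by exact_mod_cast hgrl.le)
    _ = 5 / Nat.sqrt k := by
        push_cast
        field_simp

/-- There are a constant `c > 0` and an infinite family of strings, of lengths
tending to infinity, on which `z^{⌈c log n⌉} = o(ĝ_rl)`. -/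
theorem stmt10 :
    ∃ c : ℝ, 0 < c ∧
      ∃ T : ℕ → List ℕ,
        Filter.Tendsto (fun m => (T m).length) Filter.atTop Filter.atTop ∧
        Filter.Tendsto
          (fun m => (zh (T m) ⌈c * Real.log ((T m).length)⌉₊ : ℝ) / (grl (T m) : ℝ))
          Filter.atTop (nhds 0) := by
  choose a ha hgrl using fun m : ℕ =>
    exists_hardString_lt_grl (sqrt_count_lt (Nat.le_add_left (2 ^ 20) m))
  refine ⟨2, two_pos, fun m => hardString (m + 2 ^ 20) (a m), ?_, ?_⟩
  · refine tendsto_atTop_mono (fun m => ?_) tendsto_id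
    rw [length_hardString (ha m)]
    have := Nat.le_mul_of_pos_right (m + 2 ^ 20)
      (show 0 < 2 ^ (m + 2 ^ 20) + 1 from Nat.succ_pos _)
    simp only [id]
    omega
  · have hsqrt : Tendsto (fun m : ℕ => (Nat.sqrt (m + 2 ^ 20) : ℝ)) atTop atTop :=
      tendsto_natCast_atTop_atTop.comp <|
        tendsto_atTop_atTop.2 fun N => ⟨N * N, fun m hm => Nat.le_sqrt.2 (by omega)⟩
    exact squeeze_zero (fun m => by positivity)
      (fun m => zh_div_grl_hardString_le (by omega) (ha m) (hgrl m))
      (tendsto_const_nhds.div_atTop hsqrt)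
end

section
/- For every string T, let z̃ denote the number of phrases of the greedy modified parsing of T, let z(T) denote the size of the greedy LZ77 parsing of T, and let ẑ̃ = z̃^n(T) denote the minimum size of a modified LZ-like encoding of T (no height constraint). Then ẑ̃ ≤ z̃ ≤ z(T) ≤ 2·ẑ̃; in particular, the greedy modified parsing is at most a factor 2 larger than the optimal modified LZ-like encoding. -/
variable {α : Type*}

/-- `P` is a modified LZ-like encoding of `T`: phrases have positive length, cover `T`,
and every phrase whose minimum period `p` is at least 2 has a source strictly before
its start with a previous occurrence of its length-`p` prefix. (Phrases of minimum
period 1 are encoded by their symbol, which is determined by `T`.) -/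
def IsModLZ (T : List α) (P : List (ℕ × ℕ)) : Prop :=
  (∀ q ∈ P, 1 ≤ q.1) ∧ (P.map Prod.fst).sum = T.length ∧
  ∀ j < P.length, 2 ≤ minPeriod (sub T (startOf P j) (lenOf P j)) →
    srcOf P j < startOf P j ∧
    sub T (srcOf P j) (minPeriod (sub T (startOf P j) (lenOf P j))) =
      sub T (startOf P j) (minPeriod (sub T (startOf P j) (lenOf P j)))

/-- `H` is the height function of the modified LZ-like encoding `P` of `T`:
`H i = 0` on period-1 phrases, and otherwise `H i = H (s_j + (i - b_j) % p_j) + 1`. -/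
def ModIsHeight (T : List α) (P : List (ℕ × ℕ)) (H : ℕ → ℕ) : Prop :=
  ∀ j < P.length, ∀ i, startOf P j ≤ i → i < startOf P j + lenOf P j →
    (minPeriod (sub T (startOf P j) (lenOf P j)) = 1 → H i = 0) ∧
    (2 ≤ minPeriod (sub T (startOf P j) (lenOf P j)) →
      H i = H (srcOf P j +
        (i - startOf P j) % minPeriod (sub T (startOf P j) (lenOf P j))) + 1)

/-- The modified LZ-like encoding `P` of `T` is `h`-bounded. -/
def ModHBounded (T : List α) (P : List (ℕ × ℕ)) (h : ℕ) : Prop :=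
  ∃ H : ℕ → ℕ, ModIsHeight T P H ∧ ∀ i < T.length, H i ≤ h

/-- `z̃^h(T)`: minimum size of an `h`-bounded modified LZ-like encoding of `T`. -/
noncomputable def mzh (T : List α) (h : ℕ) : ℕ :=
  sInf {k | ∃ P : List (ℕ × ℕ), IsModLZ T P ∧ ModHBounded T P h ∧ P.length = k}

/-- Validity condition for a greedy modified phrase `T[b..b+ℓ)`: for every
`1 ≤ ℓ' ≤ ℓ`, letting `p'` be the minimum period of `T[b..b+ℓ')`, either `p' = 1`
or `T[b..b+p')` has an occurrence starting before `b`. -/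
def gmOk (T : List α) (b ℓ : ℕ) : Prop :=
  b + ℓ ≤ T.length ∧ ∀ ℓ', 1 ≤ ℓ' → ℓ' ≤ ℓ →
    minPeriod (sub T b ℓ') = 1 ∨
    ∃ s < b, sub T s (minPeriod (sub T b ℓ')) = sub T b (minPeriod (sub T b ℓ'))

/-- Length of the greedy modified phrase starting at position `b`. -/
noncomputable def gmLen (T : List α) (b : ℕ) : ℕ := sSup {ℓ | 1 ≤ ℓ ∧ gmOk T b ℓ}

/-- Number of phrases of the greedy modified parsing of `T[b..)`;
`gmCount T 0 = z̃` is the size of the greedy modified parsing of `T`. -/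
noncomputable def gmCount (T : List α) (b : ℕ) : ℕ :=
  if hb : b < T.length then gmCount T (b + max 1 (gmLen T b)) + 1 else 0
termination_by T.length - b
decreasing_by
  have h1 : 1 ≤ max 1 (gmLen T b) := le_max_left _ _
  omega

section Helpers
variable {α : Type*}

lemma length_sub (T : List α) (b l : ℕ) : (sub T b l).length = min l (T.length - b) := by
  simp [sub]

lemma sub_getElem? (T : List α) {b l x : ℕ} (hx : x < l) : (sub T b l)[x]? = T[b+x]? := by
  rw [sub, List.getElem?_take]
  simp [hx, List.getElem?_drop]

lemma sub_getElem?_ge (T : List α) {b l x : ℕ} (hx : l ≤ x) : (sub T b l)[x]? = none := by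
  apply List.getElem?_eq_none
  rw [length_sub]; omega

lemma sub_eq_of_point (T : List α) {a b l : ℕ} (h : ∀ x < l, T[a+x]? = T[b+x]?) :
    sub T a l = sub T b l := by
  apply List.ext_getElem?
  intro x
  by_cases hx : x < l
  · rw [sub_getElem? T hx, sub_getElem? T hx]; exact h x hx
  · rw [sub_getElem?_ge T (by omega), sub_getElem?_ge T (by omega)]

lemma point_of_sub_eq {T : List α} {a b l : ℕ} (h : sub T a l = sub T b l)
    {x : ℕ} (hx : x < l) : T[a+x]? = T[b+x]? := by
  rw [← sub_getElem? T hx, h, sub_getElem? T hx]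

lemma sub_eq_mono {T : List α} {a b l l' : ℕ} (h : sub T a l = sub T b l) (hl : l' ≤ l) :
    sub T a l' = sub T b l' :=
  sub_eq_of_point T fun x hx => point_of_sub_eq h (by omega)

lemma isPeriod_length {w : List α} (hw : w ≠ []) : IsPeriod w w.length :=
  ⟨List.length_pos_iff.mpr hw, le_refl _, fun i hi => by omega⟩

lemma minPeriod_isPeriod {w : List α} (hw : w ≠ []) : IsPeriod w (minPeriod w) :=
  Nat.sInf_mem (⟨w.length, isPeriod_length hw⟩ : {p | IsPeriod w p}.Nonempty)

lemma minPeriod_pos {w : List α} (hw : w ≠ []) : 0 < minPeriod w :=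
  (minPeriod_isPeriod hw).1

lemma minPeriod_le_length {w : List α} (hw : w ≠ []) : minPeriod w ≤ w.length :=
  (minPeriod_isPeriod hw).2.1

lemma sub_ne_nil {T : List α} {b l : ℕ} (hl : 1 ≤ l) (hb : b < T.length) :
    sub T b l ≠ [] := by
  apply List.ne_nil_of_length_pos
  rw [length_sub]; omega

lemma minPeriod_len_one {w : List α} (hw : w.length = 1) : minPeriod w = 1 := by
  have h1 : IsPeriod w 1 := ⟨one_pos, by omega, fun i hi => by omega⟩
  have h2 := minPeriod_pos (w := w) (by intro h; simp [h] at hw)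
  have h3 : minPeriod w ≤ 1 := Nat.sInf_le h1
  omega

lemma minPeriod_sub_one {T : List α} {b : ℕ} (hb : b < T.length) :
    minPeriod (sub T b 1) = 1 :=
  minPeriod_len_one (by rw [length_sub]; omega)

/-- Period of a substring, at the level of `T`. -/
lemma period_point {T : List α} {b e p : ℕ} (hbe : b + e ≤ T.length)
    (hp : IsPeriod (sub T b e) p) {y : ℕ} (hy : y + p < e) :
    T[b+y]? = T[b+y+p]? := by
  have hlen : (sub T b e).length = e := by rw [length_sub]; omega
  have := hp.2.2 y (by omega)
  rw [sub_getElem? T (x := y) (by omega), sub_getElem? T (x := y + p) (by omega)] at this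
  rw [this]; ring_nf

end Helpers
section Greedy
variable {α : Type*}

lemma lpf_bddAbove (T : List α) (i : ℕ) :
    BddAbove {l | i + l ≤ T.length ∧ ∃ s < i, sub T s l = sub T i l} :=
  ⟨T.length, fun x hx => by have := hx.1; omega⟩

lemma lpf_ge {T : List α} {i l : ℕ} (h1 : i + l ≤ T.length)
    (h2 : ∃ s < i, sub T s l = sub T i l) : l ≤ lpf T i :=
  le_csSup (lpf_bddAbove T i) ⟨h1, h2⟩

lemma lpf_spec (T : List α) (i : ℕ) :
    lpf T i = 0 ∨ (i + lpf T i ≤ T.length ∧ ∃ s < i, sub T s (lpf T i) = sub T i (lpf T i)) := by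
  by_cases h : {l | i + l ≤ T.length ∧ ∃ s < i, sub T s l = sub T i l}.Nonempty
  · exact Or.inr (Nat.sSup_mem h (lpf_bddAbove T i))
  · left
    rw [lpf, Set.not_nonempty_iff_eq_empty.mp h]
    exact csSup_empty

lemma gmOk_one {T : List α} {b : ℕ} (hb : b < T.length) : gmOk T b 1 := by
  refine ⟨by omega, fun l' h1 h2 => ?_⟩
  have : l' = 1 := by omega
  subst this
  exact Or.inl (minPeriod_sub_one hb)

lemma gm_bddAbove (T : List α) (b : ℕ) : BddAbove {l | 1 ≤ l ∧ gmOk T b l} :=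
  ⟨T.length, fun x hx => by have := hx.2.1; omega⟩

lemma gmLen_ge {T : List α} {b l : ℕ} (h1 : 1 ≤ l) (h2 : gmOk T b l) : l ≤ gmLen T b :=
  le_csSup (gm_bddAbove T b) ⟨h1, h2⟩

lemma gmLen_spec {T : List α} {b : ℕ} (hb : b < T.length) :
    1 ≤ gmLen T b ∧ gmOk T b (gmLen T b) :=
  Nat.sSup_mem (⟨1, le_refl 1, gmOk_one hb⟩ : {l | 1 ≤ l ∧ gmOk T b l}.Nonempty) (gm_bddAbove T b)

/-- key step for part 2: within an LZ phrase, greedy-modified is OK to the end. -/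
lemma gmOk_within {T : List α} {c b : ℕ} (hcb : c ≤ b) (hc : c < T.length)
    (hb : b < c + max 1 (lpf T c)) : c + max 1 (lpf T c) ≤ b + gmLen T b := by
  rcases lpf_spec T c with h0 | ⟨hle, s, hs, hocc⟩
  · rw [h0] at hb ⊢
    simp only [Nat.max_self, max_comm] at *
    have hbc : b = c := by omega
    subst hbc
    have := gmLen_ge (le_refl 1) (gmOk_one hc)
    omega
  · have hL1 : 1 ≤ lpf T c ∨ lpf T c = 0 := by omega
    rcases hL1 with hL1 | h0
    swap
    · rw [h0] at hb ⊢
      have hbc : b = c := by omega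
      subst hbc
      have := gmLen_ge (le_refl 1) (gmOk_one hc)
      omega
    set L := lpf T c with hLdef
    have hmax : max 1 L = L := by omega
    rw [hmax] at hb ⊢
    set l : ℕ := c + L - b with hl
    have hok : gmOk T b l := by
      refine ⟨by omega, fun l' h1 h2 => ?_⟩
      right
      set p' := minPeriod (sub T b l') with hp'
      have hp'le : p' ≤ l' := by
        have := minPeriod_le_length (w := sub T b l') (sub_ne_nil h1 (by omega))
        rw [length_sub] at this
        omega
      refine ⟨s + (b - c), by omega, sub_eq_of_point T fun x hx => ?_⟩
      have := point_of_sub_eq hocc (x := b - c + x) (by omega)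
      have e1 : s + (b - c) + x = s + (b - c + x) := by omega
      have e2 : b + x = c + (b - c + x) := by omega
      rw [e1, e2]
      exact this
    have := gmLen_ge (l := l) (by omega) hok
    omega

lemma gm_le_lz_aux (T : List α) : ∀ n c b, T.length - c ≤ n → c ≤ b →
    gmCount T b ≤ lzCount T c := by
  intro n
  induction n with
  | zero =>
    intro c b hn hcb
    rw [gmCount, lzCount]
    have hc : ¬ c < T.length := by omega
    have hb : ¬ b < T.length := by omega
    simp [hc, hb]
  | succ n ih =>
    intro c b hn hcb
    by_cases hc : c < T.length
    case neg =>
      rw [gmCount, lzCount]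
      have hbn : ¬ b < T.length := by omega
      simp [hc, hbn]
    case pos =>
      rw [lzCount, dif_pos hc]
      set c' := c + max 1 (lpf T c) with hc'
      have hcc' : c < c' := by have := le_max_left 1 (lpf T c); omega
      by_cases hbc' : c' ≤ b
      · exact le_trans (ih c' b (by omega) hbc') (Nat.le_succ _)
      · push_neg at hbc'
        have hcl : c' ≤ T.length := by
          rcases lpf_spec T c with h0 | ⟨hle, _⟩
          · rw [hc', h0]; simpa using hc
          · by_cases h1 : 1 ≤ lpf T c
            · have hm : max 1 (lpf T c) = lpf T c := by omega
              rw [hc', hm]; exact hle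
            · have h0 : lpf T c = 0 := by omega
              rw [hc', h0]; simpa using hc
        have hb : b < T.length := by omega
        rw [gmCount, dif_pos hb]
        have hkey := gmOk_within hcb hc hbc'
        have hmax : max 1 (gmLen T b) = gmLen T b := by
          have := (gmLen_spec hb).1; omega
        rw [hmax]
        have : c' ≤ b + gmLen T b := hkey
        exact Nat.succ_le_succ (ih c' (b + gmLen T b) (by omega) this)

lemma gm_le_lz (T : List α) : gmCount T 0 ≤ lzCount T 0 :=
  gm_le_lz_aux T T.length 0 0 (by omega) (le_refl 0)

end Greedy
section Parsing
variable {α : Type*}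

lemma startOf_zero (P : List (ℕ × ℕ)) : startOf P 0 = 0 := by simp [startOf]

lemma startOf_cons (q : ℕ × ℕ) (Q : List (ℕ × ℕ)) (j : ℕ) :
    startOf (q :: Q) (j + 1) = q.1 + startOf Q j := by
  simp [startOf, List.take_succ_cons]

lemma lenOf_cons_zero (q : ℕ × ℕ) (Q : List (ℕ × ℕ)) : lenOf (q :: Q) 0 = q.1 := by
  simp [lenOf]

lemma lenOf_cons_succ (q : ℕ × ℕ) (Q : List (ℕ × ℕ)) (j : ℕ) :
    lenOf (q :: Q) (j + 1) = lenOf Q j := by simp [lenOf]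

lemma srcOf_cons_zero (q : ℕ × ℕ) (Q : List (ℕ × ℕ)) : srcOf (q :: Q) 0 = q.2 := by
  simp [srcOf]

lemma srcOf_cons_succ (q : ℕ × ℕ) (Q : List (ℕ × ℕ)) (j : ℕ) :
    srcOf (q :: Q) (j + 1) = srcOf Q j := by simp [srcOf]

lemma lenOf_eq {P : List (ℕ × ℕ)} {j : ℕ} (hj : j < P.length) : lenOf P j = P[j].1 := by
  simp [lenOf, List.getElem?_eq_getElem hj]

lemma lenOf_pos {P : List (ℕ × ℕ)} (hP : ∀ q ∈ P, 1 ≤ q.1) {j : ℕ} (hj : j < P.length) :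
    1 ≤ lenOf P j := by
  rw [lenOf_eq hj]
  exact hP _ (List.getElem_mem hj)

lemma startOf_succ {P : List (ℕ × ℕ)} {j : ℕ} (hj : j < P.length) :
    startOf P (j + 1) = startOf P j + lenOf P j := by
  have hm : ∀ k, startOf P k = ((P.map Prod.fst).take k).sum := by
    intro k; rw [startOf, List.map_take]
  rw [hm, hm, lenOf_eq hj, List.sum_take_succ _ _ (by simpa using hj)]
  simp [hj]

lemma startOf_le_succ (P : List (ℕ × ℕ)) (j : ℕ) : startOf P j ≤ startOf P (j + 1) := by
  by_cases hj : j < P.length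
  · rw [startOf_succ hj]; omega
  · rw [startOf, startOf, List.take_of_length_le (by omega), List.take_of_length_le (by omega)]

lemma startOf_mono (P : List (ℕ × ℕ)) {j j' : ℕ} (h : j ≤ j') : startOf P j ≤ startOf P j' := by
  induction j' with
  | zero =>
    have : j = 0 := by omega
    subst this; exact le_refl _
  | succ j' ih =>
    rcases Nat.lt_or_ge j (j' + 1) with h' | h'
    · exact le_trans (ih (by omega)) (startOf_le_succ P j')
    · have : j = j' + 1 := by omega
      subst this; exact le_refl _

lemma startOf_total (P : List (ℕ × ℕ)) : startOf P P.length = (P.map Prod.fst).sum := by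
  rw [startOf, List.take_of_length_le (le_refl _)]

lemma phrase_le {P : List (ℕ × ℕ)} {j j' : ℕ} (hj : j < P.length) (h : j < j') :
    startOf P j + lenOf P j ≤ startOf P j' := by
  rw [← startOf_succ hj]
  exact startOf_mono P h

/-- Uniqueness of the phrase containing a position. -/
lemma phrase_unique {P : List (ℕ × ℕ)} {j j' i : ℕ} (hj : j < P.length) (hj' : j' < P.length)
    (h1 : startOf P j ≤ i) (h2 : i < startOf P j + lenOf P j)
    (h1' : startOf P j' ≤ i) (h2' : i < startOf P j' + lenOf P j') : j = j' := by
  rcases Nat.lt_trichotomy j j' with h | h | h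
  · have := phrase_le hj h; omega
  · exact h
  · have := phrase_le hj' h; omega

end Parsing
section Part3
variable {α : Type*}

/-- Claim A: in the periodic part of a phrase, lpf reaches the end of the phrase. -/
lemma lpf_periodic {T : List α} {b e i : ℕ} (hbe : b + e ≤ T.length) (he : 1 ≤ e)
    (hb : b < T.length)
    (hi1 : b + minPeriod (sub T b e) ≤ i) (hi2 : i < b + e) :
    b + e ≤ i + max 1 (lpf T i) := by
  set p := minPeriod (sub T b e) with hp
  have hper := minPeriod_isPeriod (w := sub T b e) (sub_ne_nil he hb)
  have hppos : 0 < p := hper.1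
  have hge : b + e - i ≤ lpf T i := by
    apply lpf_ge (by omega)
    refine ⟨i - p, by omega, sub_eq_of_point T fun x hx => ?_⟩
    have hpt := period_point hbe hper (y := i - p + x - b) (by omega)
    have e1 : i - p + x = b + (i - p + x - b) := by omega
    have e2 : i + x = b + (i - p + x - b) + p := by omega
    rw [e1, e2]
    exact hpt
  have := le_max_right 1 (lpf T i)
  omega

/-- Claim B/C: in the initial part of a phrase with a source, lpf reaches the period. -/
lemma lpf_source {T : List α} {b p s i : ℕ} (hbp : b + p ≤ T.length) (hs : s < b)
    (hocc : sub T s p = sub T b p) (hi1 : b ≤ i) (hi2 : i < b + p) :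
    b + p ≤ i + max 1 (lpf T i) := by
  have hge : b + p - i ≤ lpf T i := by
    apply lpf_ge (by omega)
    refine ⟨s + (i - b), by omega, sub_eq_of_point T fun x hx => ?_⟩
    have hpt := point_of_sub_eq hocc (x := i - b + x) (by omega)
    have e1 : s + (i - b) + x = s + (i - b + x) := by omega
    have e2 : i + x = b + (i - b + x) := by omega
    rw [e1, e2]
    exact hpt
  have := le_max_right 1 (lpf T i)
  omega

lemma lzCount_zero {T : List α} {i : ℕ} (h : T.length ≤ i) : lzCount T i = 0 := by
  rw [lzCount]
  simp [Nat.not_lt.mpr h]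

lemma lz_le_twice_aux {T : List α} {P : List (ℕ × ℕ)} (hP : IsModLZ T P) :
    ∀ m, m ≤ P.length → ∀ i, startOf P (P.length - m) ≤ i → lzCount T i ≤ 2 * m := by
  obtain ⟨hpos, hsum, hsrc⟩ := hP
  have htot : startOf P P.length = T.length := by rw [startOf_total, hsum]
  intro m
  induction m with
  | zero =>
    intro _ i hi
    simp only [Nat.sub_zero, htot] at hi
    rw [lzCount_zero hi]
  | succ m ih =>
    intro hm i hi
    set j := P.length - (m + 1) with hj
    have hjP : j < P.length := by omega
    have hj1 : P.length - m = j + 1 := by omega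
    set b := startOf P j with hb
    set e := lenOf P j with he
    have he1 : 1 ≤ e := lenOf_pos hpos hjP
    have hsuc : startOf P (j + 1) = b + e := startOf_succ hjP
    have hbe_len : b + e ≤ T.length := by
      have := startOf_mono P (Nat.succ_le_of_lt hjP)
      rw [hsuc] at this
      omega
    have hIH : ∀ i', b + e ≤ i' → lzCount T i' ≤ 2 * m := by
      intro i' hi'
      exact ih (by omega) i' (by rw [hj1, hsuc]; exact hi')
    by_cases hcase : b + e ≤ i
    · exact le_trans (hIH i hcase) (by omega)
    · push_neg at hcase
      have hbT : b < T.length := by omega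
      have hiT : i < T.length := by omega
      set p := minPeriod (sub T b e) with hp
      have hple : p ≤ e := by
        have := minPeriod_le_length (w := sub T b e) (sub_ne_nil he1 hbT)
        rw [length_sub] at this
        omega
      have hppos : 0 < p := minPeriod_pos (sub_ne_nil he1 hbT)
      -- step from any position in [b+p, b+e): reach b+e
      have stepA : ∀ i', b + p ≤ i' → i' < b + e → b + e ≤ i' + max 1 (lpf T i') :=
        fun i' h1 h2 => lpf_periodic hbe_len he1 hbT h1 h2
      -- step from any position in [b, b+p): reach b+p
      have stepB : b ≤ i → i < b + p → b + p ≤ i + max 1 (lpf T i) := by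
        intro h1 h2
        by_cases hp2 : 2 ≤ p
        · obtain ⟨hslt, hocc⟩ := hsrc j hjP hp2
          exact lpf_source (by omega) hslt hocc h1 h2
        · have hp1 : p = 1 := by omega
          have : i = b := by omega
          have := le_max_left 1 (lpf T i)
          omega
      rw [lzCount, dif_pos hiT]
      set i1 := i + max 1 (lpf T i) with hi1
      by_cases hc1 : b + p ≤ i
      · -- one step to b+e
        have := stepA i hc1 hcase
        have := hIH i1 (by omega)
        omega
      · push_neg at hc1
        have hstep1 : b + p ≤ i1 := stepB hi hc1
        by_cases hc2 : b + e ≤ i1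
        · have := hIH i1 hc2
          omega
        · push_neg at hc2
          have hi1T : i1 < T.length := by omega
          rw [lzCount, dif_pos hi1T]
          set i2 := i1 + max 1 (lpf T i1) with hi2
          have := stepA i1 hstep1 hc2
          have := hIH i2 (by omega)
          omega

/-- Any `T` has some modified LZ-like encoding with any height bound: all-literal. -/
lemma mzh_set_nonempty (T : List α) (h : ℕ) :
    ∃ P : List (ℕ × ℕ), IsModLZ T P ∧ ModHBounded T P h ∧ P.length = T.length := by
  refine ⟨List.replicate T.length (1, 0), ⟨?_, ?_, ?_⟩, ⟨fun _ => 0, ?_, ?_⟩, by simp⟩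
  · intro q hq
    rw [List.eq_of_mem_replicate hq]
  · simp [List.map_replicate]
  · intro j hj hper
    exfalso
    simp only [List.length_replicate] at hj
    have hlen : lenOf (List.replicate T.length ((1 : ℕ), (0 : ℕ))) j = 1 := by
      simp [lenOf, List.getElem?_replicate, hj]
    have hst : startOf (List.replicate T.length ((1 : ℕ), (0 : ℕ))) j = j := by
      simp [startOf, List.map_replicate, List.take_replicate]
      omega
    rw [hlen, hst, minPeriod_sub_one hj] at hper
    omega
  · intro j hj i h1 h2
    constructor
    · intro; rfl
    · intro hper
      exfalso
      simp only [List.length_replicate] at hj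
      have hlen : lenOf (List.replicate T.length ((1 : ℕ), (0 : ℕ))) j = 1 := by
        simp [lenOf, List.getElem?_replicate, hj]
      have hst : startOf (List.replicate T.length ((1 : ℕ), (0 : ℕ))) j = j := by
        simp [startOf, List.map_replicate, List.take_replicate]
        omega
      rw [hlen, hst, minPeriod_sub_one hj] at hper
      omega
  · intro i _
    exact Nat.zero_le _

lemma lz_le_two_mzh (T : List α) : lzCount T 0 ≤ 2 * mzh T T.length := by
  have hne : {k | ∃ P : List (ℕ × ℕ), IsModLZ T P ∧ ModHBounded T P T.length ∧ P.length = k}.Nonempty := by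
    obtain ⟨P, h1, h2, h3⟩ := mzh_set_nonempty T T.length
    exact ⟨T.length, P, h1, h2, h3⟩
  obtain ⟨P, hP, _, hlen⟩ := Nat.sInf_mem hne
  rw [mzh] at *
  rw [← hlen]
  have := lz_le_twice_aux hP P.length (le_refl _) 0 (by rw [Nat.sub_self, startOf_zero])
  exact this

end Part3
section Part1
variable {α : Type*}

open Classical in
/-- Source chosen for the greedy modified phrase starting at `b`. -/
noncomputable def gmSrc (T : List α) (b : ℕ) : ℕ :=
  if h : ∃ s, s < b ∧ sub T s (minPeriod (sub T b (max 1 (gmLen T b)))) =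
      sub T b (minPeriod (sub T b (max 1 (gmLen T b)))) then h.choose else 0

/-- The greedy modified parsing as a list of (length, source) pairs. -/
noncomputable def gmParse (T : List α) (b : ℕ) : List (ℕ × ℕ) :=
  if hb : b < T.length then
    (max 1 (gmLen T b), gmSrc T b) :: gmParse T (b + max 1 (gmLen T b))
  else []
termination_by T.length - b
decreasing_by
  have h1 : 1 ≤ max 1 (gmLen T b) := le_max_left _ _
  omega

lemma gmParse_length (T : List α) : ∀ n b, T.length - b ≤ n →
    (gmParse T b).length = gmCount T b := by
  intro n
  induction n with
  | zero =>
    intro b hn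
    rw [gmParse, gmCount]
    have : ¬ b < T.length := by omega
    simp [this]
  | succ n ih =>
    intro b hn
    by_cases hb : b < T.length
    · rw [gmParse, gmCount, dif_pos hb, dif_pos hb, List.length_cons]
      have h1 : 1 ≤ max 1 (gmLen T b) := le_max_left _ _
      rw [ih _ (by omega)]
    · rw [gmParse, gmCount]
      simp [hb]

lemma gmParse_sum (T : List α) : ∀ n b, T.length - b ≤ n →
    ((gmParse T b).map Prod.fst).sum = T.length - b := by
  intro n
  induction n with
  | zero =>
    intro b hn
    rw [gmParse]
    have : ¬ b < T.length := by omega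
    simp [this]
    omega
  | succ n ih =>
    intro b hn
    by_cases hb : b < T.length
    · rw [gmParse, dif_pos hb]
      have h1 : 1 ≤ max 1 (gmLen T b) := le_max_left _ _
      simp only [List.map_cons, List.sum_cons]
      rw [ih _ (by omega)]
      have hlen : b + max 1 (gmLen T b) ≤ T.length := by
        have := (gmLen_spec hb).2.1
        have := (gmLen_spec hb).1
        have hm : max 1 (gmLen T b) = gmLen T b := by omega
        omega
      omega
    · rw [gmParse]
      simp [hb]
      omega

lemma gmParse_pos (T : List α) : ∀ n b, T.length - b ≤ n →
    ∀ q ∈ gmParse T b, 1 ≤ q.1 := by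
  intro n
  induction n with
  | zero =>
    intro b hn q hq
    rw [gmParse] at hq
    have : ¬ b < T.length := by omega
    simp [this] at hq
  | succ n ih =>
    intro b hn q hq
    by_cases hb : b < T.length
    · rw [gmParse, dif_pos hb] at hq
      rcases List.mem_cons.mp hq with h | h
      · rw [h]; exact le_max_left _ _
      · have h1 : 1 ≤ max 1 (gmLen T b) := le_max_left _ _
        exact ih _ (by omega) q h
    · rw [gmParse] at hq
      simp [hb] at hq

lemma gmParse_phrase (T : List α) : ∀ n b, T.length - b ≤ n →
    ∀ j < (gmParse T b).length,
    2 ≤ minPeriod (sub T (b + startOf (gmParse T b) j) (lenOf (gmParse T b) j)) →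
    srcOf (gmParse T b) j < b + startOf (gmParse T b) j ∧
    sub T (srcOf (gmParse T b) j)
        (minPeriod (sub T (b + startOf (gmParse T b) j) (lenOf (gmParse T b) j))) =
      sub T (b + startOf (gmParse T b) j)
        (minPeriod (sub T (b + startOf (gmParse T b) j) (lenOf (gmParse T b) j))) := by
  intro n
  induction n with
  | zero =>
    intro b hn j hj
    rw [gmParse] at hj
    have : ¬ b < T.length := by omega
    simp [this] at hj
  | succ n ih =>
    intro b hn j hj hper
    by_cases hb : b < T.length
    swap
    · rw [gmParse, dif_neg hb] at hj; simp at hj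
    have h1 : 1 ≤ max 1 (gmLen T b) := le_max_left _ _
    have hPdef : gmParse T b =
        (max 1 (gmLen T b), gmSrc T b) :: gmParse T (b + max 1 (gmLen T b)) := by
      rw [gmParse, dif_pos hb]
    cases j with
    | zero =>
      have hm : max 1 (gmLen T b) = gmLen T b := by
        have := (gmLen_spec hb).1; omega
      simp only [hPdef, startOf_zero, lenOf_cons_zero, srcOf_cons_zero, Nat.add_zero] at hper ⊢
      rw [hm] at hper ⊢
      have hdisj := (gmLen_spec hb).2.2 (gmLen T b) (gmLen_spec hb).1 (le_refl _)
      rcases hdisj with h | h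
      · omega
      · have hex : ∃ s, s < b ∧ sub T s (minPeriod (sub T b (gmLen T b))) =
            sub T b (minPeriod (sub T b (gmLen T b))) := h
        unfold gmSrc
        rw [hm, dif_pos hex]
        exact hex.choose_spec
    | succ j =>
      rw [hPdef] at hj hper ⊢
      simp only [List.length_cons] at hj
      simp only [startOf_cons, lenOf_cons_succ, srcOf_cons_succ] at hper ⊢
      have harr : b + (max 1 (gmLen T b) +
          startOf (gmParse T (b + max 1 (gmLen T b))) j) =
          (b + max 1 (gmLen T b)) + startOf (gmParse T (b + max 1 (gmLen T b))) j := by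
        omega
      rw [harr] at hper ⊢
      exact ih (b + max 1 (gmLen T b)) (by omega) j (by omega) hper

/-- Height function for a modified LZ-like parsing, by strong recursion on position. -/
noncomputable def modH (T : List α) (P : List (ℕ × ℕ)) (i : ℕ) : ℕ :=
  if h : ∃ j, j < P.length ∧ startOf P j ≤ i ∧ i < startOf P j + lenOf P j ∧
      2 ≤ minPeriod (sub T (startOf P j) (lenOf P j)) ∧ srcOf P j < startOf P j then
    modH T P (srcOf P h.choose +
      (i - startOf P h.choose) % minPeriod (sub T (startOf P h.choose) (lenOf P h.choose))) + 1
  else 0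
termination_by i
decreasing_by
  obtain ⟨hj, h1, h2, h3, h4⟩ := h.choose_spec
  have := Nat.mod_le (i - startOf P h.choose)
    (minPeriod (sub T (startOf P h.choose) (lenOf P h.choose)))
  omega

lemma modH_le (T : List α) (P : List (ℕ × ℕ)) : ∀ i, modH T P i ≤ i := by
  intro i
  induction i using Nat.strong_induction_on with
  | _ i ih =>
    rw [modH]
    split
    next h =>
      obtain ⟨hj, h1, h2, h3, h4⟩ := h.choose_spec
      have hlt : srcOf P h.choose + (i - startOf P h.choose) %
          minPeriod (sub T (startOf P h.choose) (lenOf P h.choose)) < i := by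
        have := Nat.mod_le (i - startOf P h.choose)
          (minPeriod (sub T (startOf P h.choose) (lenOf P h.choose)))
        omega
      have := ih _ hlt
      omega
    next => omega

lemma modH_isHeight {T : List α} {P : List (ℕ × ℕ)} (hP : IsModLZ T P) :
    ModIsHeight T P (modH T P) := by
  obtain ⟨hpos, hsum, hsrc⟩ := hP
  intro j hj i h1 h2
  constructor
  · intro hper1
    rw [modH]
    rw [dif_neg]
    intro h
    obtain ⟨hj', h1', h2', h3', h4'⟩ := h.choose_spec
    have : h.choose = j := phrase_unique hj' hj h1' h2' h1 h2
    rw [this, hper1] at h3'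
    omega
  · intro hper2
    have hex : ∃ j', j' < P.length ∧ startOf P j' ≤ i ∧ i < startOf P j' + lenOf P j' ∧
        2 ≤ minPeriod (sub T (startOf P j') (lenOf P j')) ∧ srcOf P j' < startOf P j' :=
      ⟨j, hj, h1, h2, hper2, (hsrc j hj hper2).1⟩
    rw [modH, dif_pos hex]
    obtain ⟨hj', h1', h2', h3', h4'⟩ := hex.choose_spec
    have heq : hex.choose = j := phrase_unique hj' hj h1' h2' h1 h2
    rw [heq]

lemma gmParse_isModLZ (T : List α) : IsModLZ T (gmParse T 0) := by
  refine ⟨gmParse_pos T T.length 0 (by omega), ?_, ?_⟩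
  · rw [gmParse_sum T T.length 0 (by omega)]; omega
  · intro j hj hper
    have := gmParse_phrase T T.length 0 (by omega) j hj
    simp only [Nat.zero_add] at this ⊢
    exact this hper

lemma mzh_le_gm (T : List α) : mzh T T.length ≤ gmCount T 0 := by
  rw [← gmParse_length T T.length 0 (by omega)]
  apply Nat.sInf_le
  refine ⟨gmParse T 0, gmParse_isModLZ T, ⟨modH T (gmParse T 0),
    modH_isHeight (gmParse_isModLZ T), fun i hi => ?_⟩, rfl⟩
  have := modH_le T (gmParse T 0) i
  omega

end Part1


/-- With `z̃` the size of the greedy modified parsing, `z(T)` the size of the greedy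
LZ77 parsing and `ẑ̃ = z̃^n(T)` the minimum size of a modified LZ-like encoding
(no height constraint): `ẑ̃ ≤ z̃ ≤ z(T) ≤ 2ẑ̃`. -/
theorem stmt12 (T : List α) :
    mzh T T.length ≤ gmCount T 0 ∧ gmCount T 0 ≤ lzCount T 0 ∧
      lzCount T 0 ≤ 2 * mzh T T.length :=
  ⟨mzh_le_gm T, gm_le_lz T, lz_le_two_mzh T⟩
end
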